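/- Let Γ be a countable group and 1 ≤ p < ∞ a real number. Let w : Γ → ℝ be a summable function with w(γ) > 0 for all γ ∈ Γ and Σ_{γ∈Γ} w(γ) ≤ 1. Let X := {x ∈ ℝ^Γ : Σ_{γ∈Γ} |x_γ|^p ≤ 1}, equipped with the topology induced from the product topology on ℝ^Γ, and define d(x, y) := Σ_{γ∈Γ} w(γ)·|x_γ − y_γ| for x, y ∈ X. Γ acts on X on the right by (x·δ)_γ := x_{δγ}. Then for every ε > 0 and every finite subset Ω ⊆ Γ, there exist a finite subset Ω' ⊆ Γ and a continuous map F : X → ℝ^{Ω'} such that: (i) for every x ∈ X, at most ⌈(4/ε)^p⌉ − 1 coordinates of F(x) are nonzero; and (ii) for all x, y ∈ X with F(x) = F(y) and every δ ∈ Ω, d(x·δ, y·δ) ≤ ε. -/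

import Mathlib

/-!
Soft-threshold every coordinate of `x` at level `ε/4`, keeping only the finitely many
coordinates `δγ` with `δ ∈ Ω` and `γ` in a finite set `E` outside of which `w` has total weight
at most `ε/4`. A coordinate survives only if `|x_γ| > ε/4`, and since `∑ |x_γ|^p ≤ 1` fewer than
`(4/ε)^p` of them do. If `F x = F y`, then `|x_γ - y_γ| ≤ ε/2` on the kept coordinates and
`|x_γ - y_γ| ≤ 2` everywhere, so `d(x·δ, y·δ) ≤ ε/2 · ∑ w + 2 · ε/4 ≤ ε`.
-/

open scoped Pointwise

noncomputable def softThreshold (c t : ℝ) : ℝ := max (t - c) 0 + min (t + c) 0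

section SoftThreshold

variable {c : ℝ}

theorem continuous_softThreshold (c : ℝ) : Continuous (softThreshold c) := by
  unfold softThreshold
  fun_prop

theorem abs_softThreshold_sub_le (hc : 0 ≤ c) (t : ℝ) : |softThreshold c t - t| ≤ c := by
  unfold softThreshold
  rw [abs_le]
  constructor
  · cases max_cases (t - c) 0 <;> cases min_cases (t + c) 0 <;> linarith
  · cases max_cases (t - c) 0 <;> cases min_cases (t + c) 0 <;> linarith

theorem lt_abs_of_softThreshold_ne_zero {t : ℝ} (h : softThreshold c t ≠ 0) : c < |t| := by
  contrapose! h
  rw [abs_le] at h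
  unfold softThreshold
  rw [max_eq_right (by linarith), min_eq_right (by linarith), add_zero]

theorem abs_sub_le_of_softThreshold_eq (hc : 0 ≤ c) {s t : ℝ}
    (h : softThreshold c s = softThreshold c t) : |s - t| ≤ 2 * c := by
  have hs := abs_softThreshold_sub_le hc s
  have ht := abs_softThreshold_sub_le hc t
  rw [h] at hs
  calc |s - t| = |(softThreshold c t - t) - (softThreshold c t - s)| := by ring_nf
    _ ≤ |softThreshold c t - t| + |softThreshold c t - s| := abs_sub _ _
    _ ≤ 2 * c := by linarith

end SoftThreshold

section UnitBall

variable {ι : Type*} {x : ι → ℝ} {p : ℝ}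

theorem sum_rpow_le_one_of_tsum_ofReal_le_one (hx : ∑' i, ENNReal.ofReal (|x i| ^ p) ≤ 1)
    (s : Finset ι) : ∑ i ∈ s, |x i| ^ p ≤ 1 := by
  rw [← ENNReal.ofReal_le_one, ENNReal.ofReal_sum_of_nonneg fun i _ => by positivity]
  exact (ENNReal.sum_le_tsum s).trans hx

theorem abs_le_one_of_tsum_ofReal_le_one (hp : 0 < p)
    (hx : ∑' i, ENNReal.ofReal (|x i| ^ p) ≤ 1) (i : ι) : |x i| ≤ 1 := by
  have h := sum_rpow_le_one_of_tsum_ofReal_le_one hx {i}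
  rw [Finset.sum_singleton] at h
  by_contra! hlt
  linarith [Real.one_lt_rpow hlt hp]

theorem card_filter_lt_abs_lt_inv_rpow (hp : 0 < p) {c : ℝ} (hc : 0 < c)
    (hx : ∑' i, ENNReal.ofReal (|x i| ^ p) ≤ 1) (s : Finset ι) :
    ((s.filter fun i => c < |x i|).card : ℝ) < c⁻¹ ^ p := by
  set S := s.filter fun i => c < |x i|
  have hcp : 0 < c ^ p := Real.rpow_pos_of_pos hc p
  rw [Real.inv_rpow hc.le, ← one_div, lt_div_iff₀ hcp]
  rcases S.eq_empty_or_nonempty with hS | hS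
  · simp [hS]
  calc (S.card : ℝ) * c ^ p = ∑ _i ∈ S, c ^ p := by rw [Finset.sum_const, nsmul_eq_mul]
    _ < ∑ i ∈ S, |x i| ^ p := Finset.sum_lt_sum_of_nonempty hS fun i hi =>
        Real.rpow_lt_rpow hc.le (Finset.mem_filter.mp hi).2 hp
    _ ≤ 1 := sum_rpow_le_one_of_tsum_ofReal_le_one hx S

theorem ncard_softThreshold_ne_zero_lt (hp : 0 < p) {c : ℝ} (hc : 0 < c)
    (hx : ∑' i, ENNReal.ofReal (|x i| ^ p) ≤ 1) (s : Finset ι) :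
    ({i : s | softThreshold c (x i) ≠ 0}.ncard : ℝ) < c⁻¹ ^ p := by
  refine lt_of_le_of_lt ?_ (card_filter_lt_abs_lt_inv_rpow hp hc hx s)
  rw [← Set.ncard_coe_finset, Nat.cast_le]
  refine Set.ncard_le_ncard_of_injOn Subtype.val (fun i hi => ?_) Subtype.val_injective.injOn
  rw [Finset.coe_filter]
  exact ⟨i.2, lt_abs_of_softThreshold_ne_zero hi⟩

end UnitBall

theorem tsum_mul_le_of_le_on_finset {ι : Type*} {w f : ι → ℝ} (hw : ∀ i, 0 ≤ w i)
    (hws : Summable w) (hf : ∀ i, 0 ≤ f i) {E : Finset ι} {a b : ℝ} (ha : 0 ≤ a)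
    (hfE : ∀ i ∈ E, f i ≤ a) (hfb : ∀ i, f i ≤ b) :
    ∑' i, w i * f i ≤ a * ∑' i, w i + b * ∑' i : {i // i ∉ E}, w i := by
  set g := fun i => a * w i + b * Set.indicator {i | i ∉ E} w i
  have hg : Summable g := (hws.mul_left a).add ((hws.indicator _).mul_left b)
  have hfg : ∀ i, w i * f i ≤ g i := by
    intro i
    by_cases hi : i ∈ E
    · simp only [g, Set.indicator_of_notMem (s := {i | i ∉ E}) (not_not.mpr hi), mul_zero,
        add_zero]
      nlinarith [hfE i hi, hw i]
    · simp only [g, Set.indicator_of_mem (s := {i | i ∉ E}) hi]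
      nlinarith [hfb i, hw i]
  calc ∑' i, w i * f i ≤ ∑' i, g i :=
        Summable.tsum_le_tsum hfg (.of_nonneg_of_le (fun i => mul_nonneg (hw i) (hf i)) hfg hg) hg
    _ = a * ∑' i, w i + b * ∑' i : {i // i ∉ E}, w i := by
        rw [Summable.tsum_add (hws.mul_left a) ((hws.indicator _).mul_left b), tsum_mul_left,
          tsum_mul_left, ← tsum_subtype]
        rfl

theorem widim_ball_lp_group_bounded_general (Γ : Type*) [Group Γ]
    (p : ℝ) (hp : 1 ≤ p)
    (w : Γ → ℝ) (hw_pos : ∀ γ, 0 < w γ) (hw_summable : Summable w)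
    (hw_sum : ∑' γ, w γ ≤ 1)
    (ε : ℝ) (hε : 0 < ε) (Ω : Finset Γ) :
    ∃ (Ω' : Finset Γ)
      (F : {x : Γ → ℝ // ∑' γ, ENNReal.ofReal (|x γ| ^ p) ≤ 1} → (Ω' → ℝ)),
      Continuous F ∧
      (∀ x, ({i : Ω' | F x i ≠ 0}.ncard : ℤ) ≤ ⌈(4 / ε) ^ p⌉ - 1) ∧
      (∀ x y, F x = F y → ∀ δ ∈ Ω,
        ∑' γ, w γ * |x.1 (δ * γ) - y.1 (δ * γ)| ≤ ε) := by
  classical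
  have hp0 : 0 < p := by linarith
  have hc : 0 < ε / 4 := by positivity
  obtain ⟨E, hE⟩ : ∃ E : Finset Γ, ∑' γ : {γ // γ ∉ E}, w γ ≤ ε / 4 :=
    ((tendsto_tsum_compl_atTop_zero w).eventually_le_const hc).exists
  refine ⟨Ω * E, fun x i => softThreshold (ε / 4) (x.1 i),
    continuous_pi fun i => (continuous_softThreshold _).comp
      ((continuous_apply _).comp continuous_subtype_val), fun x => ?_, fun x y hxy δ hδ => ?_⟩
  · have h := ncard_softThreshold_ne_zero_lt hp0 hc x.2 (Ω * E)
    rw [inv_div] at h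
    exact Int.le_sub_one_of_lt (Int.lt_ceil.mpr (mod_cast h))
  · have hkept : ∀ γ ∈ E, |x.1 (δ * γ) - y.1 (δ * γ)| ≤ ε / 2 := fun γ hγ => by
      have := abs_sub_le_of_softThreshold_eq hc.le
        (congrFun hxy ⟨δ * γ, Finset.mul_mem_mul hδ hγ⟩)
      linarith
    have hall : ∀ γ, |x.1 (δ * γ) - y.1 (δ * γ)| ≤ 2 := fun γ => by
      linarith [abs_sub (x.1 (δ * γ)) (y.1 (δ * γ)),
        abs_le_one_of_tsum_ofReal_le_one hp0 x.2 (δ * γ),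
        abs_le_one_of_tsum_ofReal_le_one hp0 y.2 (δ * γ)]
    calc ∑' γ, w γ * |x.1 (δ * γ) - y.1 (δ * γ)|
        ≤ ε / 2 * ∑' γ, w γ + 2 * ∑' γ : {γ // γ ∉ E}, w γ :=
          tsum_mul_le_of_le_on_finset (fun γ => (hw_pos γ).le) hw_summable (fun _ => abs_nonneg _)
            (by positivity) hkept hall
      _ ≤ ε := by nlinarith

/-- Corollary 1.5: for the unit ball `X = B(ℓ^p(Γ))` (with the product topology) of a
countable group `Γ`, with compatible distance `d(x,y) = ∑_γ w(γ)|x_γ - y_γ|` and the right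
`Γ`-action `(x·δ)_γ = x_{δγ}`, for every `ε > 0` and finite `Ω ⊆ Γ` there is an
`ε`-embedding `F` of `(X, d_Ω)` into a space of vectors with at most `⌈(4/ε)^p⌉ - 1`
nonzero coordinates. -/
theorem widim_ball_lp_group_bounded (Γ : Type*) [Group Γ] [Countable Γ]
    (p : ℝ) (hp : 1 ≤ p)
    (w : Γ → ℝ) (hw_pos : ∀ γ, 0 < w γ) (hw_summable : Summable w)
    (hw_sum : ∑' γ, w γ ≤ 1)
    (ε : ℝ) (hε : 0 < ε) (Ω : Finset Γ) :
    ∃ (Ω' : Finset Γ)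
      (F : {x : Γ → ℝ // ∑' γ, ENNReal.ofReal (|x γ| ^ p) ≤ 1} → (Ω' → ℝ)),
      Continuous F ∧
      (∀ x, ({i : Ω' | F x i ≠ 0}.ncard : ℤ) ≤ ⌈(4 / ε) ^ p⌉ - 1) ∧
      (∀ x y, F x = F y → ∀ δ ∈ Ω,
        ∑' γ, w γ * |x.1 (δ * γ) - y.1 (δ * γ)| ≤ ε) :=
  widim_ball_lp_group_bounded_general Γ p hp w hw_pos hw_summable hw_sum ε hε Ω
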